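/- For every integer m ≥ 3, the Sperner systems U^{2m+1}_1 and U^{2m+1}_2 over E_m ∪ {0} are strongly hypomorphic: for every two-element subset I of E_m ∪ {0}, the Sperner systems (U^{2m+1}_1)*_I and (U^{2m+1}_2)*_I are isomorphic. -/

import Mathlib

section SetSystems

variable {α β : Type*}

/-- A family of finite sets is a Sperner system (an antichain under inclusion). -/
def IsSperner [DecidableEq α] (F : Finset (Finset α)) : Prop :=
  ∀ S ∈ F, ∀ T ∈ F, S ⊆ T → S = T

/-- Isomorphism of set systems with the given ground sets: a bijection `σ` of the
ground set `A` onto the ground set `B` mapping the family `F` onto the family `G`. -/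
def SystemIso [DecidableEq α] [DecidableEq β] (A : Finset α) (F : Finset (Finset α))
    (B : Finset β) (G : Finset (Finset β)) : Prop :=
  ∃ σ : α → β, Set.BijOn σ ↑A ↑B ∧ F.image (fun S => S.image σ) = G

/-- Identification of `v` with `u` inside a block: `S_I = (S ∖ {v}) ∪ {u}` if `v ∈ S`,
and `S_I = S` otherwise. -/
def identifyBlock [DecidableEq α] (u v : α) (S : Finset α) : Finset α :=
  if v ∈ S then insert u (S.erase v) else S

/-- The identified system `𝒜_I` for `I = {u, v}` (with `u` the kept representative). -/
def identifySystem [DecidableEq α] (u v : α) (F : Finset (Finset α)) : Finset (Finset α) :=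
  F.image (identifyBlock u v)

/-- The minimal members of a family with respect to inclusion. -/
def minimals [DecidableEq α] (F : Finset (Finset α)) : Finset (Finset α) :=
  F.filter (fun S => ∀ T ∈ F, T ⊆ S → T = S)

/-- `𝒜*_I`: the Sperner system of minimal members of the identified system. -/
def starMinor [DecidableEq α] (u v : α) (F : Finset (Finset α)) : Finset (Finset α) :=
  minimals (identifySystem u v F)

/-- Strong hypomorphism: for every two-element subset `I = {u, v}` of the ground set `A`,
the systems `F*_I` and `G*_I` (both over `A ∖ {v}`) are isomorphic. -/
def StronglyHypomorphic [DecidableEq α] (A : Finset α) (F G : Finset (Finset α)) : Prop :=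
  ∀ u ∈ A, ∀ v ∈ A, u ≠ v →
    SystemIso (A.erase v) (starMinor u v F) (A.erase v) (starMinor u v G)

/-- Hypomorphism: a bijection `φ` of the two-element subsets of the ground set `A`
such that `F*_I` is isomorphic to `G*_{φ I}` for every two-element subset `I`. -/
def Hypomorphic [DecidableEq α] (A : Finset α) (F G : Finset (Finset α)) : Prop :=
  ∃ φ : {P : Finset α // P ∈ A.powersetCard 2} ≃ {P : Finset α // P ∈ A.powersetCard 2},
    ∀ (P : {P : Finset α // P ∈ A.powersetCard 2}) (u v u' v' : α),
      u ≠ v → (P : Finset α) = {u, v} → u' ≠ v' → ((φ P : Finset α)) = {u', v'} →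
      SystemIso (A.erase v) (starMinor u v F) (A.erase v') (starMinor u' v' G)

end SetSystems

/-- The ground set `E_m`: two disjoint copies of `{1, …, m}` (modelled as `ZMod m`);
`Sum.inl i` is the unprimed element `i` and `Sum.inr i` is the primed element `i'`. -/
abbrev Em (m : ℕ) := ZMod m ⊕ ZMod m

/-- `A^m_J = J ∪ ({1,…,m} ∖ J)'`. -/
def AJ (m : ℕ) [NeZero m] (J : Finset (ZMod m)) : Finset (Em m) :=
  J.image Sum.inl ∪ Jᶜ.image Sum.inr

/-- `G^m_1 = {A^m_J : J ⊆ {1,…,m}, |J| odd}`. -/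
def G1 (m : ℕ) [NeZero m] : Finset (Finset (Em m)) :=
  ((Finset.univ : Finset (ZMod m)).powerset.filter fun J => Odd J.card).image (AJ m)

/-- `G^m_2 = {A^m_J : J ⊆ {1,…,m}, |J| even}`. -/
def G2 (m : ℕ) [NeZero m] : Finset (Finset (Em m)) :=
  ((Finset.univ : Finset (ZMod m)).powerset.filter fun J => Even J.card).image (AJ m)

/-- `F^m_p = E_m ∖ {p, p', (p+1)'}`. -/
def Fblock (m : ℕ) [NeZero m] (p : ZMod m) : Finset (Em m) :=
  Finset.univ \ {Sum.inl p, Sum.inr p, Sum.inr (p + 1)}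

/-- `F^m = {F^m_p : p ∈ {1,…,m}}`. -/
def Fsys (m : ℕ) [NeZero m] : Finset (Finset (Em m)) :=
  Finset.univ.image (Fblock m)

/-- `ℳ^m_1 = G^m_1 ∪ F^m`. -/
def M1 (m : ℕ) [NeZero m] : Finset (Finset (Em m)) := G1 m ∪ Fsys m

/-- `ℳ^m_2 = G^m_2 ∪ F^m`. -/
def M2 (m : ℕ) [NeZero m] : Finset (Finset (Em m)) := G2 m ∪ Fsys m

/-- `U^{2m+1}_i = {S ∪ {0} : S ∈ F}` over `E_m ∪ {0}`, where the new element `0`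
is modelled by `none : Option (Em m)`. -/
def Usmall (m : ℕ) [NeZero m] (F : Finset (Finset (Em m))) :
    Finset (Finset (Option (Em m))) :=
  F.image fun S => insert none (S.image some)

/-- `U^{2m+2}_i = {S ∪ {0} : S ∈ F} ∪ {{0, 0'}}` over `E_m ∪ {0, 0'}`, where the new
elements `0` and `0'` are modelled by `Sum.inr false` and `Sum.inr true`. -/
def Ubig (m : ℕ) [NeZero m] (F : Finset (Finset (Em m))) :
    Finset (Finset (Em m ⊕ Bool)) :=
  (F.image fun S => insert (Sum.inr false) (S.image Sum.inl)) ∪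
    {({Sum.inr false, Sum.inr true} : Finset (Em m ⊕ Bool))}

section Abstract
open Finset
variable {α : Type*} [DecidableEq α]

lemma mem_image_involutive {g : α → α} (hg : Function.Involutive g) (s : Finset α) (x : α) :
    x ∈ s.image g ↔ g x ∈ s := by
  constructor
  · intro h
    obtain ⟨y, hy, rfl⟩ := Finset.mem_image.1 h
    simpa [hg y] using hy
  · intro h
    exact Finset.mem_image.2 ⟨g x, h, hg x⟩

lemma minimals_insert_of_le {x : Finset α} {G : Finset (Finset α)}
    (h : ∃ y ∈ G, y ⊆ x) : minimals (insert x G) = minimals G := by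
  obtain ⟨y, hyG, hyx⟩ := h
  unfold minimals
  ext S
  simp only [mem_filter, mem_insert]
  constructor
  · rintro ⟨hS | hS, hmin⟩
    · have hy : y = S := hmin y (Or.inr hyG) (hS ▸ hyx)
      refine ⟨hy ▸ hyG, fun T hT hTS => hmin T (Or.inr hT) hTS⟩
    · exact ⟨hS, fun T hT hTS => hmin T (Or.inr hT) hTS⟩
  · rintro ⟨hS, hmin⟩
    refine ⟨Or.inr hS, ?_⟩
    rintro T (rfl | hT) hTS
    · have hy : y = S := hmin y hyG (hyx.trans hTS)
      exact subset_antisymm hTS (hy ▸ hyx)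
    · exact hmin T hT hTS

lemma identifyBlock_image {σ : α → α} (hσ : Function.Injective σ) {u v : α}
    (hu : σ u = u) (hv : σ v = v) (S : Finset α) :
    identifyBlock u v (S.image σ) = (identifyBlock u v S).image σ := by
  have hmem : v ∈ S.image σ ↔ v ∈ S := by
    constructor
    · intro h
      obtain ⟨y, hy, hyv⟩ := Finset.mem_image.1 h
      rw [← hv] at hyv
      rwa [← hσ hyv]
    · intro h
      exact Finset.mem_image.2 ⟨v, h, hv⟩
  unfold identifyBlock
  by_cases h : v ∈ S
  · rw [if_pos (hmem.2 h), if_pos h, image_insert, hu, Finset.image_erase hσ, hv]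
  · rw [if_neg (fun hc => h (hmem.1 hc)), if_neg h]

lemma minimals_image {σ : α → α} (hσ : Function.Injective σ) (F : Finset (Finset α)) :
    minimals (F.image (fun S => S.image σ)) = (minimals F).image (fun S => S.image σ) := by
  have himg : Function.Injective (fun S : Finset α => S.image σ) :=
    fun S T h => Finset.image_injective hσ h
  unfold minimals
  ext X
  simp only [mem_filter, mem_image]
  constructor
  · rintro ⟨⟨S, hS, rfl⟩, hmin⟩
    refine ⟨S, ⟨hS, fun T hT hTS => ?_⟩, rfl⟩
    have := hmin (T.image σ) ⟨T, hT, rfl⟩ (Finset.image_subset_image hTS)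
    exact himg this
  · rintro ⟨S, ⟨hS, hmin⟩, rfl⟩
    refine ⟨⟨S, hS, rfl⟩, ?_⟩
    rintro T ⟨T', hT', rfl⟩ hTS
    rw [Finset.image_subset_image_iff hσ] at hTS
    rw [hmin T' hT' hTS]

lemma transfer {σ : α → α} (hσ : Function.Injective σ) {u v : α} (hu : σ u = u) (hv : σ v = v)
    {F G : Finset (Finset α)} {x : Finset α} (hxF : x ∈ F) (hxG : x ∈ G)
    (him : (F.erase x).image (fun S => S.image σ) = G.erase x)
    (hyF : ∃ y ∈ F.erase x, identifyBlock u v y ⊆ identifyBlock u v x)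
    (hyG : ∃ y ∈ G.erase x, identifyBlock u v y ⊆ identifyBlock u v x) :
    (starMinor u v F).image (fun S => S.image σ) = starMinor u v G := by
  have key : ∀ (H : Finset (Finset α)), x ∈ H →
      (∃ y ∈ H.erase x, identifyBlock u v y ⊆ identifyBlock u v x) →
      starMinor u v H = minimals (identifySystem u v (H.erase x)) := by
    rintro H hxH ⟨y, hyH, hsub⟩
    have h1 : starMinor u v H
        = minimals (insert (identifyBlock u v x) (identifySystem u v (H.erase x))) := by
      rw [starMinor]
      congr 1
      rw [identifySystem, identifySystem, ← Finset.image_insert, insert_erase hxH]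
    rw [h1]
    exact minimals_insert_of_le ⟨identifyBlock u v y, mem_image_of_mem _ hyH, hsub⟩
  rw [key F hxF hyF, key G hxG hyG, ← minimals_image hσ]
  congr 1
  rw [← him, identifySystem, identifySystem, image_image, image_image]
  apply image_congr
  intro S _
  exact (identifyBlock_image hσ hu hv S).symm

lemma systemIso_of_image {β : Type*} [DecidableEq β] [Fintype β] {σ : β → β}
    (hinv : Function.Involutive σ) {v : β} (hv : σ v = v)
    {F G : Finset (Finset β)} (h : F.image (fun S => S.image σ) = G) :
    SystemIso (Finset.univ.erase v) F (Finset.univ.erase v) G := by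
  refine ⟨σ, ⟨?_, hinv.injective.injOn, ?_⟩, h⟩
  · intro t ht
    simp only [coe_erase, Set.mem_diff, Set.mem_singleton_iff, Set.mem_univ, true_and,
      coe_univ] at ht ⊢
    intro hc
    apply ht
    have := congrArg σ hc
    rwa [hinv t, hv] at this
  · intro t ht
    simp only [coe_erase, Set.mem_diff, Set.mem_singleton_iff, Set.mem_univ, true_and,
      coe_univ] at ht
    refine ⟨σ t, ?_, hinv t⟩
    simp only [coe_erase, Set.mem_diff, Set.mem_singleton_iff, Set.mem_univ, true_and, coe_univ]
    intro hc
    apply ht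
    have := congrArg σ hc
    rwa [hinv t, hv] at this

lemma identifyBlock_subset {u v : α} {x y : Finset α}
    (hA : ∀ t ∈ y, t ≠ v → t ∈ x ∨ t = u) (hux : v ∈ x ∨ u ∈ x) :
    identifyBlock u v y ⊆ identifyBlock u v x := by
  unfold identifyBlock
  by_cases hvy : v ∈ y <;> by_cases hvx : v ∈ x <;>
    simp only [hvy, hvx, if_true, if_false, if_pos, if_neg, not_false_iff] <;>
    intro t ht
  · rcases mem_insert.1 ht with rfl | ht'
    · exact mem_insert_self _ _
    · obtain ⟨htv, hty⟩ := mem_erase.1 ht'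
      rcases hA t hty htv with h | rfl
      · exact mem_insert_of_mem (mem_erase.2 ⟨htv, h⟩)
      · exact mem_insert_self _ _
  · have hux' : u ∈ x := hux.resolve_left hvx
    rcases mem_insert.1 ht with rfl | ht'
    · exact hux'
    · obtain ⟨htv, hty⟩ := mem_erase.1 ht'
      rcases hA t hty htv with h | rfl
      · exact h
      · exact hux'
  · have htv : t ≠ v := fun hc => hvy (hc ▸ ht)
    rcases hA t ht htv with h | rfl
    · exact mem_insert_of_mem (mem_erase.2 ⟨htv, h⟩)
    · exact mem_insert_self _ _
  · have hux' : u ∈ x := hux.resolve_left hvx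
    have htv : t ≠ v := fun hc => hvy (hc ▸ ht)
    rcases hA t ht htv with h | rfl
    · exact h
    · exact hux'

end Abstract
section Concrete
open Finset
variable {m : ℕ} [NeZero m]

/-- `S ∪ {0}` at the `Option` level. -/
def Uh (S : Finset (Em m)) : Finset (Option (Em m)) := insert none (S.image some)

lemma Usmall_eq (F : Finset (Finset (Em m))) : Usmall m F = F.image Uh := rfl

@[simp] lemma none_mem_Uh (S : Finset (Em m)) : (none : Option (Em m)) ∈ Uh S :=
  mem_insert_self _ _

@[simp] lemma some_mem_Uh (S : Finset (Em m)) (e : Em m) : some e ∈ Uh S ↔ e ∈ S := by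
  simp [Uh]

lemma Uh_inj : Function.Injective (Uh (m := m)) := by
  intro S T h
  ext e
  rw [← some_mem_Uh S e, ← some_mem_Uh T e, h]

@[simp] lemma mem_AJ_inl (J : Finset (ZMod m)) (i : ZMod m) :
    (Sum.inl i : Em m) ∈ AJ m J ↔ i ∈ J := by
  simp [AJ]

@[simp] lemma mem_AJ_inr (J : Finset (ZMod m)) (i : ZMod m) :
    (Sum.inr i : Em m) ∈ AJ m J ↔ i ∉ J := by
  simp [AJ]

@[simp] lemma mem_Fblock (p : ZMod m) (x : Em m) :
    x ∈ Fblock m p ↔ x ≠ .inl p ∧ x ≠ .inr p ∧ x ≠ .inr (p + 1) := by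
  simp [Fblock, not_or]

/-- Swap the two copies at coordinate `c`. -/
def swapEm (c : ZMod m) : Em m → Em m
  | .inl i => if i = c then .inr i else .inl i
  | .inr i => if i = c then .inl i else .inr i

lemma swapEm_invol (c : ZMod m) : Function.Involutive (swapEm (m := m) c) := by
  intro x
  rcases x with i | i <;> by_cases h : i = c <;> simp [swapEm, h]

@[simp] lemma swapEm_inl (c i : ZMod m) (h : i ≠ c) : swapEm c (.inl i) = .inl i := by
  simp [swapEm, h]

@[simp] lemma swapEm_inr (c i : ZMod m) (h : i ≠ c) : swapEm c (.inr i) = .inr i := by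
  simp [swapEm, h]

lemma Uh_image_map (g : Em m → Em m) (S : Finset (Em m)) :
    (Uh S).image (Option.map g) = Uh (S.image g) := by
  simp [Uh, image_insert, image_image, Function.comp_def]

/-- toggle `c` in `J`. -/
def tog (c : ZMod m) (J : Finset (ZMod m)) : Finset (ZMod m) :=
  if c ∈ J then J.erase c else insert c J

lemma tog_invol (c : ZMod m) : Function.Involutive (tog c) := by
  intro J
  by_cases h : c ∈ J
  · have h1 : tog c J = J.erase c := if_pos h
    rw [h1, tog, if_neg (notMem_erase c J), insert_erase h]
  · have h1 : tog c J = insert c J := if_neg h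
    rw [h1, tog, if_pos (mem_insert_self c J), erase_insert h]

@[simp] lemma mem_tog (c : ZMod m) (J : Finset (ZMod m)) (j : ZMod m) :
    j ∈ tog c J ↔ (if j = c then c ∉ J else j ∈ J) := by
  unfold tog
  by_cases hj : j = c <;> by_cases hc : c ∈ J <;> simp [hj, hc]

lemma AJ_image_swap (c : ZMod m) (J : Finset (ZMod m)) :
    (AJ m J).image (swapEm c) = AJ m (tog c J) := by
  ext x
  rw [mem_image_involutive (swapEm_invol c)]
  rcases x with j | j <;> by_cases hj : j = c <;>
    simp [swapEm, hj]

lemma odd_card_tog (c : ZMod m) (J : Finset (ZMod m)) :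
    Odd ((tog c J).card) ↔ Even J.card := by
  by_cases h : c ∈ J
  · have h0 : tog c J = J.erase c := if_pos h
    have h1 : (J.erase c).card + 1 = J.card := Finset.card_erase_add_one h
    rw [h0, ← h1, Nat.even_add_one, Nat.not_even_iff_odd]
  · have h0 : tog c J = insert c J := if_neg h
    rw [h0, Finset.card_insert_of_notMem h, Nat.odd_add_one, Nat.not_odd_iff_even]

lemma image_tog_parity (c : ZMod m) :
    ((Finset.univ.powerset.filter fun J : Finset (ZMod m) => Odd J.card).image (tog c))
      = Finset.univ.powerset.filter fun J => Even J.card := by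
  ext K
  simp only [mem_image, mem_filter, mem_powerset, subset_univ, true_and]
  constructor
  · rintro ⟨J, hJ, rfl⟩
    have h2 := odd_card_tog c (tog c J)
    rw [tog_invol c J] at h2
    exact h2.1 hJ
  · intro hK
    exact ⟨tog c K, (odd_card_tog c K).2 hK, tog_invol c K⟩

lemma Fblock_image_swap (c q : ZMod m) (h : q + 1 ≠ c) :
    (Fblock m q).image (swapEm c) = Fblock m q := by
  ext x
  rw [mem_image_involutive (swapEm_invol c)]
  by_cases hx1 : x = Sum.inl c
  · subst hx1
    have hs : swapEm c (Sum.inl c) = Sum.inr c := by simp [swapEm]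
    rw [hs]
    simp only [mem_Fblock, ne_eq]
    constructor
    · rintro ⟨-, h2, -⟩
      refine ⟨?_, by simp, by simp⟩
      simp only [Sum.inl.injEq]
      intro hc
      exact h2 (by rw [hc])
    · rintro ⟨h1, -, -⟩
      refine ⟨by simp, ?_, ?_⟩
      · simp only [Sum.inr.injEq]
        intro hc
        exact h1 (by rw [hc])
      · simp only [Sum.inr.injEq]
        intro hc
        exact h (by rw [hc])
  · by_cases hx2 : x = Sum.inr c
    · subst hx2
      have hs : swapEm c (Sum.inr c) = Sum.inl c := by simp [swapEm]
      rw [hs]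
      simp only [mem_Fblock, ne_eq]
      constructor
      · rintro ⟨h1, -, -⟩
        refine ⟨by simp, ?_, ?_⟩
        · simp only [Sum.inr.injEq]
          intro hc
          exact h1 (by rw [hc])
        · simp only [Sum.inr.injEq]
          intro hc
          exact h (by rw [hc])
      · rintro ⟨-, h2, -⟩
        refine ⟨?_, by simp, by simp⟩
        simp only [Sum.inl.injEq]
        intro hc
        exact h2 (by rw [hc])
    · have hs : swapEm c x = x := by
        rcases x with j | j
        · exact swapEm_inl c j (fun hc => hx1 (by rw [hc]))
        · exact swapEm_inr c j (fun hc => hx2 (by rw [hc]))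
      rw [hs]

end Concrete
section Concrete2
open Finset
variable {m : ℕ} [NeZero m]

lemma AJ_inj : Function.Injective (AJ m) := by
  intro J K h
  ext j
  rw [← mem_AJ_inl J j, ← mem_AJ_inl K j, h]

lemma Fblock_inj : Function.Injective (Fblock m) := by
  intro p q h
  by_contra hpq
  have h1 : (Sum.inl q : Em m) ∈ Fblock m p := by
    simp [Ne.symm hpq]
  rw [h] at h1
  simp at h1

lemma zmod_facts (hm : 3 ≤ m) :
    (1 : ZMod m) ≠ 0 ∧ (2 : ZMod m) ≠ 0 ∧ (2 : ZMod m) ≠ 1 := by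
  have h1 : (1 : ZMod m) ≠ 0 := by
    intro h
    rw [show (1 : ZMod m) = ((1 : ℕ) : ZMod m) by push_cast; ring,
      ZMod.natCast_eq_zero_iff] at h
    have := Nat.le_of_dvd (by norm_num) h
    omega
  have h2 : (2 : ZMod m) ≠ 0 := by
    intro h
    rw [show (2 : ZMod m) = ((2 : ℕ) : ZMod m) by push_cast; ring,
      ZMod.natCast_eq_zero_iff] at h
    have := Nat.le_of_dvd (by norm_num) h
    omega
  exact ⟨h1, h2, fun h => h1 (by linear_combination h)⟩

lemma AJ_ne_Fblock (hm : 3 ≤ m) (J : Finset (ZMod m)) (p : ZMod m) :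
    AJ m J ≠ Fblock m p := by
  obtain ⟨h1, h2, h21⟩ := zmod_facts hm
  intro h
  have hl : (Sum.inl (p + 2) : Em m) ∈ Fblock m p := by
    simp only [mem_Fblock, ne_eq, Sum.inl.injEq]
    refine ⟨?_, by simp, by simp⟩
    intro hc
    exact h2 (by linear_combination hc)
  have hr : (Sum.inr (p + 2) : Em m) ∈ Fblock m p := by
    simp only [mem_Fblock, ne_eq, Sum.inr.injEq]
    refine ⟨by simp, ?_, ?_⟩
    · intro hc
      exact h2 (by linear_combination hc)
    · intro hc
      exact h21 (by linear_combination hc)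
  rw [← h] at hl hr
  rw [mem_AJ_inl] at hl
  rw [mem_AJ_inr] at hr
  exact hr hl

lemma Fblock_not_mem_G1 (hm : 3 ≤ m) (p : ZMod m) : Fblock m p ∉ G1 m := by
  intro h
  obtain ⟨J, -, hJ⟩ := mem_image.1 h
  exact AJ_ne_Fblock hm J p hJ

lemma Fblock_not_mem_G2 (hm : 3 ≤ m) (p : ZMod m) : Fblock m p ∉ G2 m := by
  intro h
  obtain ⟨J, -, hJ⟩ := mem_image.1 h
  exact AJ_ne_Fblock hm J p hJ

lemma G1_image_swap (c : ZMod m) :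
    (G1 m).image (fun S => S.image (swapEm c)) = G2 m := by
  rw [G1, G2, image_image]
  have : ((fun S => S.image (swapEm c)) ∘ AJ m) = AJ m ∘ tog c := by
    funext J
    exact AJ_image_swap c J
  rw [this, ← image_image, image_tog_parity]

lemma Fsys_erase_image_swap (p : ZMod m) :
    ((Fsys m).erase (Fblock m p)).image (fun S => S.image (swapEm (p + 1)))
      = (Fsys m).erase (Fblock m p) := by
  rw [Fsys, ← Finset.image_erase Fblock_inj, image_image]
  apply image_congr
  intro q hq
  have hqp : q ≠ p := (mem_erase.1 hq).1
  exact Fblock_image_swap (p + 1) q (fun hc => hqp (by linear_combination hc))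

lemma M_erase_image (hm : 3 ≤ m) (p : ZMod m) :
    ((M1 m).erase (Fblock m p)).image (fun S => S.image (swapEm (p + 1)))
      = (M2 m).erase (Fblock m p) := by
  rw [M1, M2, Finset.erase_union_distrib, Finset.erase_union_distrib,
    Finset.erase_eq_of_notMem (Fblock_not_mem_G1 hm p),
    Finset.erase_eq_of_notMem (Fblock_not_mem_G2 hm p),
    image_union, G1_image_swap, Fsys_erase_image_swap]

lemma him_lemma (hm : 3 ≤ m) (p : ZMod m) :
    ((Usmall m (M1 m)).erase (Uh (Fblock m p))).image
        (fun S => S.image (Option.map (swapEm (p + 1))))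
      = (Usmall m (M2 m)).erase (Uh (Fblock m p)) := by
  rw [Usmall_eq, Usmall_eq, ← Finset.image_erase Uh_inj, ← Finset.image_erase Uh_inj,
    image_image]
  have : ((fun S => S.image (Option.map (swapEm (p + 1)))) ∘ Uh)
      = Uh ∘ (fun S => S.image (swapEm (p + 1))) := by
    funext S
    exact Uh_image_map (swapEm (p + 1)) S
  rw [this, ← image_image, M_erase_image hm p]

end Concrete2
section Concrete3
open Finset
variable {m : ℕ} [NeZero m]

/-- index of an element of `Em m`. -/
def dd : Em m → ZMod m := Sum.elim id id

@[simp] lemma dd_inl (a : ZMod m) : dd (Sum.inl a : Em m) = a := rfl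
@[simp] lemma dd_inr (a : ZMod m) : dd (Sum.inr a : Em m) = a := rfl

/-- The shape condition for witness index-sets. -/
def shapeOK : Em m → Finset (ZMod m) → Prop
  | .inl d, J => d ∈ J ∧ d + 1 ∈ J
  | .inr d, J => d ∉ J ∧ d + 1 ∈ J

lemma key_incl (w : Em m) {J : Finset (ZMod m)} (hJ : shapeOK w J)
    {u v : Option (Em m)} (hw : some w = u ∨ some w = v)
    (hux : v ∈ Uh (Fblock m (dd w)) ∨ u ∈ Uh (Fblock m (dd w))) :
    identifyBlock u v (Uh (AJ m J)) ⊆ identifyBlock u v (Uh (Fblock m (dd w))) := by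
  apply identifyBlock_subset _ hux
  intro t ht htv
  match t with
  | none => exact Or.inl (none_mem_Uh _)
  | some e =>
    have he : e ∈ AJ m J := (some_mem_Uh _ _).1 ht
    rcases e with j | j
    · have hj : j ∈ J := (mem_AJ_inl _ _).1 he
      rcases w with d | d
      · obtain ⟨hd, hd1⟩ := hJ
        by_cases hjd : j = d
        · subst hjd
          rcases hw with hw | hw
          · exact Or.inr hw
          · exact absurd hw htv
        · refine Or.inl ((some_mem_Uh _ _).2 ?_)
          simp only [mem_Fblock, dd, Sum.elim_inl, id, ne_eq, Sum.inl.injEq]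
          exact ⟨hjd, by simp, by simp⟩
      · obtain ⟨hd, hd1⟩ := hJ
        have hjd : j ≠ d := fun hc => hd (hc ▸ hj)
        refine Or.inl ((some_mem_Uh _ _).2 ?_)
        simp only [mem_Fblock, dd, Sum.elim_inr, id, ne_eq, Sum.inl.injEq]
        exact ⟨hjd, by simp, by simp⟩
    · have hj : j ∉ J := (mem_AJ_inr _ _).1 he
      rcases w with d | d
      · obtain ⟨hd, hd1⟩ := hJ
        have hjd : j ≠ d := fun hc => hj (hc ▸ hd)
        have hjd1 : j ≠ d + 1 := fun hc => hj (hc ▸ hd1)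
        refine Or.inl ((some_mem_Uh _ _).2 ?_)
        simp only [mem_Fblock, dd, Sum.elim_inl, id, ne_eq, Sum.inr.injEq]
        exact ⟨by simp, hjd, hjd1⟩
      · obtain ⟨hd, hd1⟩ := hJ
        by_cases hjd : j = d
        · subst hjd
          rcases hw with hw | hw
          · exact Or.inr hw
          · exact absurd hw htv
        · have hjd1 : j ≠ d + 1 := fun hc => hj (hc ▸ hd1)
          refine Or.inl ((some_mem_Uh _ _).2 ?_)
          simp only [mem_Fblock, dd, Sum.elim_inr, id, ne_eq, Sum.inr.injEq]
          exact ⟨by simp, hjd, hjd1⟩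

lemma exists_shape_odd (hm : 3 ≤ m) (w : Em m) :
    ∃ J : Finset (ZMod m), shapeOK w J ∧ Odd J.card := by
  obtain ⟨h1, h2, h21⟩ := zmod_facts hm
  have hdd1 : ∀ d : ZMod m, d ≠ d + 1 := fun d hc => h1 (by linear_combination hc.symm)
  have hdd2 : ∀ d : ZMod m, d ≠ d + 2 := fun d hc => h2 (by linear_combination hc.symm)
  have hd12 : ∀ d : ZMod m, d + 1 ≠ d + 2 := fun d hc => h1 (by linear_combination hc.symm)
  rcases w with d | d
  · refine ⟨{d, d + 1, d + 2}, ⟨by simp, by simp⟩, ?_⟩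
    have hc : ({d, d + 1, d + 2} : Finset (ZMod m)).card = 3 := by
      rw [card_insert_of_notMem (by simp [hdd1 d, hdd2 d]),
        card_insert_of_notMem (by simp [hd12 d]), card_singleton]
    rw [hc]
    exact ⟨1, rfl⟩
  · exact ⟨{d + 1}, ⟨by simp [hdd1 d], by simp⟩, by simp⟩

lemma exists_shape_even (hm : 3 ≤ m) (w : Em m) :
    ∃ J : Finset (ZMod m), shapeOK w J ∧ Even J.card := by
  obtain ⟨h1, h2, h21⟩ := zmod_facts hm
  have hdd1 : ∀ d : ZMod m, d ≠ d + 1 := fun d hc => h1 (by linear_combination hc.symm)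
  have hdd2 : ∀ d : ZMod m, d ≠ d + 2 := fun d hc => h2 (by linear_combination hc.symm)
  have hd12 : ∀ d : ZMod m, d + 1 ≠ d + 2 := fun d hc => h1 (by linear_combination hc.symm)
  rcases w with d | d
  · refine ⟨{d, d + 1}, ⟨by simp, by simp⟩, ?_⟩
    have hc : ({d, d + 1} : Finset (ZMod m)).card = 2 := by
      rw [card_insert_of_notMem (by simp [hdd1 d]), card_singleton]
    rw [hc]
    exact ⟨1, rfl⟩
  · refine ⟨{d + 1, d + 2}, ⟨by simp [hdd1 d, hdd2 d], by simp⟩, ?_⟩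
    have hc : ({d + 1, d + 2} : Finset (ZMod m)).card = 2 := by
      rw [card_insert_of_notMem (by simp [hd12 d]), card_singleton]
    rw [hc]
    exact ⟨1, rfl⟩

lemma AJ_mem_M1 {J : Finset (ZMod m)} (h : Odd J.card) : AJ m J ∈ M1 m :=
  mem_union_left _ (mem_image_of_mem _ (mem_filter.2 ⟨mem_powerset.2 (subset_univ J), h⟩))

lemma AJ_mem_M2 {J : Finset (ZMod m)} (h : Even J.card) : AJ m J ∈ M2 m :=
  mem_union_left _ (mem_image_of_mem _ (mem_filter.2 ⟨mem_powerset.2 (subset_univ J), h⟩))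

lemma Fblock_mem_M1 (p : ZMod m) : Fblock m p ∈ M1 m :=
  mem_union_right _ (mem_image_of_mem _ (mem_univ p))

lemma Fblock_mem_M2 (p : ZMod m) : Fblock m p ∈ M2 m :=
  mem_union_right _ (mem_image_of_mem _ (mem_univ p))

lemma grand (hm : 3 ≤ m) (u v : Option (Em m)) (w : Em m)
    (hw : some w = u ∨ some w = v)
    (hux : v ∈ Uh (Fblock m (dd w)) ∨ u ∈ Uh (Fblock m (dd w)))
    (hgu : Option.map (swapEm (dd w + 1)) u = u)
    (hgv : Option.map (swapEm (dd w + 1)) v = v) :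
    SystemIso (Finset.univ.erase v) (starMinor u v (Usmall m (M1 m)))
      (Finset.univ.erase v) (starMinor u v (Usmall m (M2 m))) := by
  set d := dd w with hd
  have hσinv : Function.Involutive (Option.map (swapEm (m := m) (d + 1))) := by
    intro x
    rcases x with _ | e
    · rfl
    · simp [swapEm_invol (d + 1) e]
  apply systemIso_of_image hσinv hgv
  apply transfer hσinv.injective hgu hgv
    (x := Uh (Fblock m d))
  · exact mem_image_of_mem _ (Fblock_mem_M1 d)
  · exact mem_image_of_mem _ (Fblock_mem_M2 d)
  · exact him_lemma hm d
  · obtain ⟨J, hsh, hodd⟩ := exists_shape_odd hm w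
    refine ⟨Uh (AJ m J), mem_erase.2 ⟨?_, mem_image_of_mem _ (AJ_mem_M1 hodd)⟩,
      key_incl w hsh hw hux⟩
    intro hc
    exact AJ_ne_Fblock hm J d (Uh_inj hc)
  · obtain ⟨J, hsh, heven⟩ := exists_shape_even hm w
    refine ⟨Uh (AJ m J), mem_erase.2 ⟨?_, mem_image_of_mem _ (AJ_mem_M2 heven)⟩,
      key_incl w hsh hw hux⟩
    intro hc
    exact AJ_ne_Fblock hm J d (Uh_inj hc)

end Concrete3
section Concrete4
open Finset
variable {m : ℕ} [NeZero m]

lemma iB_AJ_lr (a : ZMod m) (J : Finset (ZMod m)) :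
    identifyBlock (some (Sum.inl a)) (some (Sum.inr a)) (Uh (AJ m J))
      = Uh (AJ m (insert a J)) := by
  unfold identifyBlock
  by_cases h : a ∈ J
  · rw [if_neg (by simp [h]), insert_eq_self.2 h]
  · rw [if_pos (by simp [h])]
    ext t
    rcases t with _ | e
    · simp
    · rcases e with j | j <;> by_cases hj : j = a <;> simp [hj, h]
lemma iB_AJ_rl (a : ZMod m) (J : Finset (ZMod m)) :
    identifyBlock (some (Sum.inr a)) (some (Sum.inl a)) (Uh (AJ m J))
      = Uh (AJ m (J.erase a)) := by
  unfold identifyBlock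
  by_cases h : a ∈ J
  · rw [if_pos (by simp [h])]
    ext t
    rcases t with _ | e
    · simp
    · rcases e with j | j <;> by_cases hj : j = a <;> simp [hj, h]
  · rw [if_neg (by simp [h]), erase_eq_of_notMem h]

lemma insert_parity (a : ZMod m) :
    ((Finset.univ.powerset.filter fun J : Finset (ZMod m) => Odd J.card).image (insert a))
      = ((Finset.univ.powerset.filter fun J => Even J.card).image (insert a)) := by
  rw [← image_tog_parity a, image_image]
  apply image_congr
  intro J _
  show insert a J = insert a (tog a J)
  by_cases h : a ∈ J
  · rw [tog, if_pos h, insert_erase h, insert_eq_self.2 h]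
  · rw [tog, if_neg h, Finset.insert_idem]

lemma erase_parity (a : ZMod m) :
    ((Finset.univ.powerset.filter fun J : Finset (ZMod m) => Odd J.card).image (fun J => J.erase a))
      = ((Finset.univ.powerset.filter fun J => Even J.card).image (fun J => J.erase a)) := by
  rw [← image_tog_parity a, image_image]
  apply image_congr
  intro J _
  show J.erase a = (tog a J).erase a
  by_cases h : a ∈ J
  · rw [tog, if_pos h, Finset.erase_idem]
  · rw [tog, if_neg h, Finset.erase_insert_eq_erase]

lemma special_core (u v : Option (Em m)) (f : Finset (ZMod m) → Finset (ZMod m))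
    (hiB : ∀ J : Finset (ZMod m), identifyBlock u v (Uh (AJ m J)) = Uh (AJ m (f J)))
    (hpar : ((Finset.univ.powerset.filter fun J : Finset (ZMod m) => Odd J.card).image f)
          = ((Finset.univ.powerset.filter fun J => Even J.card).image f)) :
    identifySystem u v (Usmall m (M1 m)) = identifySystem u v (Usmall m (M2 m)) := by
  rw [M1, M2, Usmall_eq, Usmall_eq, image_union, image_union, identifySystem, identifySystem,
    image_union, image_union]
  congr 1
  rw [G1, G2, image_image, image_image, image_image, image_image]
  have hcalc : ∀ (P : Finset (Finset (ZMod m))),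
      P.image ((identifyBlock u v ∘ Uh) ∘ AJ m) = (P.image f).image (Uh ∘ AJ m) := by
    intro P
    rw [image_image]
    apply image_congr
    intro J _
    exact hiB J
  show (Finset.univ.powerset.filter fun J : Finset (ZMod m) => Odd J.card).image
      ((identifyBlock u v ∘ Uh) ∘ AJ m) = _
  rw [hcalc, hcalc, hpar]

lemma special_iso (u v : Option (Em m))
    (h : identifySystem u v (Usmall m (M1 m)) = identifySystem u v (Usmall m (M2 m))) :
    SystemIso (Finset.univ.erase v) (starMinor u v (Usmall m (M1 m)))
      (Finset.univ.erase v) (starMinor u v (Usmall m (M2 m))) := by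
  refine ⟨id, Set.bijOn_id _, ?_⟩
  rw [starMinor, starMinor, h]
  simp

lemma map_some_inl (c j : ZMod m) (h : j ≠ c) :
    Option.map (swapEm c) (some (Sum.inl j)) = some (Sum.inl j) := by
  simp [swapEm_inl c j h]

lemma map_some_inr (c j : ZMod m) (h : j ≠ c) :
    Option.map (swapEm c) (some (Sum.inr j)) = some (Sum.inr j) := by
  simp [swapEm_inr c j h]

end Concrete4
/-- For every integer `m ≥ 3`, the Sperner systems `U^{2m+1}_1` and `U^{2m+1}_2` over
`E_m ∪ {0}` are strongly hypomorphic: for every two-element subset `I` of `E_m ∪ {0}`,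
the Sperner systems `(U^{2m+1}_1)*_I` and `(U^{2m+1}_2)*_I` are isomorphic. -/
theorem statement4 (m : ℕ) (hm : 3 ≤ m) :
    letI : NeZero m := ⟨by omega⟩
    StronglyHypomorphic (Finset.univ : Finset (Option (Em m)))
      (Usmall m (M1 m)) (Usmall m (M2 m)) := by
  haveI : NeZero m := ⟨by omega⟩
  intro u _ v _ huv
  obtain ⟨h1, h2, h21⟩ := zmod_facts hm
  have hdd1 : ∀ d : ZMod m, d ≠ d + 1 := fun d hc => h1 (by linear_combination hc.symm)
  have hdd2 : ∀ d : ZMod m, d ≠ d + 2 := fun d hc => h2 (by linear_combination hc.symm)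
  rcases u with _ | e
  · -- u = none
    rcases v with _ | f
    · exact absurd rfl huv
    · rcases f with b | b
      · refine grand hm none (some (Sum.inl b)) (Sum.inl b) (Or.inr rfl)
          (Or.inr (none_mem_Uh _)) rfl (map_some_inl _ b (hdd1 b))
      · refine grand hm none (some (Sum.inr b)) (Sum.inr b) (Or.inr rfl)
          (Or.inr (none_mem_Uh _)) rfl (map_some_inr _ b (hdd1 b))
  · rcases v with _ | f
    · -- v = none
      rcases e with a | a
      · refine grand hm (some (Sum.inl a)) none (Sum.inl a) (Or.inl rfl)
          (Or.inl (none_mem_Uh _)) (map_some_inl _ a (hdd1 a)) rfl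
      · refine grand hm (some (Sum.inr a)) none (Sum.inr a) (Or.inl rfl)
          (Or.inl (none_mem_Uh _)) (map_some_inr _ a (hdd1 a)) rfl
    · rcases e with a | a <;> rcases f with b | b
      · -- inl a, inl b
        have hab : a ≠ b := fun hc => huv (by rw [hc])
        by_cases hb : b = a + 1
        · refine grand hm _ _ (Sum.inl b) (Or.inr rfl) (Or.inr ?_)
            (map_some_inl _ a ?_) (map_some_inl _ b (hdd1 b))
          · rw [some_mem_Uh]
            simp [hab]
          · subst hb
            intro hc
            simp only [dd_inl, dd_inr] at hc
            exact hdd2 a (by linear_combination hc)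
        · refine grand hm _ _ (Sum.inl a) (Or.inl rfl) (Or.inl ?_)
            (map_some_inl _ a (hdd1 a)) (map_some_inl _ b hb)
          rw [some_mem_Uh]
          simp [hab.symm]
      · -- inl a, inr b
        by_cases hab : a = b
        · subst hab
          exact special_iso _ _ (special_core _ _ (insert a)
            (iB_AJ_lr a) (insert_parity a))
        · by_cases hb : b = a + 1
          · refine grand hm _ _ (Sum.inr b) (Or.inr rfl) (Or.inr ?_)
              (map_some_inl _ a ?_) (map_some_inr _ b (hdd1 b))
            · rw [some_mem_Uh]
              simp [hab]
            · subst hb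
              intro hc
              simp only [dd_inl, dd_inr] at hc
              exact hdd2 a (by linear_combination hc)
          · refine grand hm _ _ (Sum.inl a) (Or.inl rfl) (Or.inl ?_)
              (map_some_inl _ a (hdd1 a)) (map_some_inr _ b hb)
            rw [some_mem_Uh]
            simp [Ne.symm hab, hb]
      · -- inr a, inl b
        by_cases hab : a = b
        · subst hab
          exact special_iso _ _ (special_core _ _ (fun J => J.erase a)
            (iB_AJ_rl a) (erase_parity a))
        · by_cases hb : b = a + 1
          · refine grand hm _ _ (Sum.inl b) (Or.inr rfl) (Or.inr ?_)
              (map_some_inr _ a ?_) (map_some_inl _ b (hdd1 b))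
            · rw [some_mem_Uh]
              have hab1 : a ≠ b + 1 := by
                subst hb
                intro hc
                exact hdd2 a (by linear_combination hc)
              simp [hab, hab1]
            · subst hb
              intro hc
              simp only [dd_inl, dd_inr] at hc
              exact hdd2 a (by linear_combination hc)
          · refine grand hm _ _ (Sum.inr a) (Or.inl rfl) (Or.inl ?_)
              (map_some_inr _ a (hdd1 a)) (map_some_inl _ b hb)
            rw [some_mem_Uh]
            simp [Ne.symm hab]
      · -- inr a, inr b
        have hab : a ≠ b := fun hc => huv (by rw [hc])
        by_cases hb : b = a + 1
        · refine grand hm _ _ (Sum.inr b) (Or.inr rfl) (Or.inr ?_)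
            (map_some_inr _ a ?_) (map_some_inr _ b (hdd1 b))
          · rw [some_mem_Uh]
            have hab1 : a ≠ b + 1 := by
              subst hb
              intro hc
              exact hdd2 a (by linear_combination hc)
            simp [hab, hab1]
          · subst hb
            intro hc
            simp only [dd_inl, dd_inr] at hc
            exact hdd2 a (by linear_combination hc)
        · refine grand hm _ _ (Sum.inr a) (Or.inl rfl) (Or.inl ?_)
            (map_some_inr _ a (hdd1 a)) (map_some_inr _ b hb)
          rw [some_mem_Uh]
          simp [Ne.symm hab, hb]
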